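/- Let X be a positive random variable with finite mean whose distribution function F is continuous and strictly increasing on its support. The Zenga inequality curve λ(p) of X is constant in p on (0,1) if, and only if, F is a Type I Pareto distribution, i.e. F(x) = 1 − (x/x₀)^{−α} for x ≥ x₀ for some α > 1 and x₀ > 0; in that case the constant value is 1/α. -/

import Mathlib

open MeasureTheory Real Set Filter Topology

noncomputable section

/-- Generalized inverse (quantile function) of a CDF `F`:
`F⁻¹(p) = inf {x : F x ≥ p}`. -/
def quantile (F : ℝ → ℝ) (p : ℝ) : ℝ := sInf {x : ℝ | p ≤ F x}

/-- CDF of a real random variable `X` on a measure space. -/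
def cdfOf {Ω : Type*} [MeasureSpace Ω] (X : Ω → ℝ) (x : ℝ) : ℝ :=
  ((volume : Measure Ω) {ω | X ω ≤ x}).toReal

/-- First incomplete moment `Q(x) = E[X 1{X ≤ x}] / E[X]`. -/
def incMoment {Ω : Type*} [MeasureSpace Ω] (X : Ω → ℝ) (x : ℝ) : ℝ :=
  (∫ ω in {ω | X ω ≤ x}, X ω) / (∫ ω, X ω)

/-- The Zenga inequality curve `λ(p) = 1 - log(1 - Q(F⁻¹(p))) / log(1 - p)`. -/
def zenga {Ω : Type*} [MeasureSpace Ω] (X : Ω → ℝ) (p : ℝ) : ℝ :=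
  1 - Real.log (1 - incMoment X (quantile (cdfOf X) p)) / Real.log (1 - p)

/-- CDF of the Type I Pareto distribution `Pa(α, x₀)`. -/
def paretoCDF (α x₀ x : ℝ) : ℝ := if x₀ ≤ x then 1 - (x / x₀) ^ (-α) else 0

section Aux

set_option linter.unusedSectionVars false

section RealAux
variable {u : ℝ → ℝ}

lemma int_sub_const' (hu : Continuous u) {x : ℝ} (hx : 0 ≤ x) (c : ℝ) :
    ∫ t in Ioc 0 x, (u t - c) = (∫ t in Ioc 0 x, u t) - x * c := by
  rw [integral_sub (hu.integrableOn_Ioc)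
    (integrableOn_const measure_Ioc_lt_top.ne)]
  congr 1
  rw [setIntegral_const, measureReal_def, Real.volume_Ioc, smul_eq_mul,
    ENNReal.toReal_ofReal (by linarith)]
  ring

lemma W_add' (hu : Continuous u) {x y : ℝ} (h0 : 0 < x) (hxy : x ≤ y) :
    ∫ t in Ioc 0 y, u t = (∫ t in Ioc 0 x, u t) + ∫ t in Ioc x y, u t := by
  rw [← Ioc_union_Ioc_eq_Ioc h0.le hxy]
  exact setIntegral_union (Ioc_disjoint_Ioc_of_le le_rfl) measurableSet_Ioc
    hu.integrableOn_Ioc hu.integrableOn_Ioc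

lemma sandwich' (hu : Continuous u) (hanti : Antitone u) {x y : ℝ} (hxy : x ≤ y) :
    (y - x) * u y ≤ (∫ t in Ioc x y, u t) ∧ (∫ t in Ioc x y, u t) ≤ (y - x) * u x := by
  have hμ : (volume (Ioc x y)).toReal = y - x := by
    rw [Real.volume_Ioc, ENNReal.toReal_ofReal (by linarith)]
  constructor
  · have := setIntegral_mono_on (μ := volume) (s := Ioc x y) (f := fun _ => u y)
      (g := u) (integrableOn_const measure_Ioc_lt_top.ne)
      hu.integrableOn_Ioc measurableSet_Ioc
      (fun t (ht : t ∈ Ioc x y) => hanti ht.2)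
    rwa [setIntegral_const, measureReal_def, hμ, smul_eq_mul] at this
  · have := setIntegral_mono_on (μ := volume) (s := Ioc x y) (f := u)
      (g := fun _ => u x) hu.integrableOn_Ioc
      (integrableOn_const measure_Ioc_lt_top.ne) measurableSet_Ioc
      (fun t (ht : t ∈ Ioc x y) => hanti ht.1.le)
    rwa [setIntegral_const, measureReal_def, hμ, smul_eq_mul] at this

end RealAux

variable {Ω : Type*} [MeasureSpace Ω] [IsProbabilityMeasure (volume : Measure Ω)]
variable {X : Ω → ℝ}

lemma cdf_nonneg' {Ω : Type*} [MeasureSpace Ω] (X : Ω → ℝ) (x : ℝ) :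
    0 ≤ cdfOf X x := ENNReal.toReal_nonneg

lemma cdf_le_one' (x : ℝ) : cdfOf X x ≤ 1 := by
  have := prob_le_one (μ := (volume : Measure Ω)) (s := {ω | X ω ≤ x})
  simpa [cdfOf] using ENNReal.toReal_mono ENNReal.one_ne_top this

lemma cdf_mono' : Monotone (cdfOf X) := fun x y hxy =>
  ENNReal.toReal_mono (measure_ne_top _ _)
    (measure_mono (fun ω (h : X ω ≤ x) => h.trans hxy))

lemma cdf_nonpos' (hpos : ∀ ω, 0 < X ω) {x : ℝ} (hx : x ≤ 0) : cdfOf X x = 0 := by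
  have : {ω | X ω ≤ x} = (∅ : Set Ω) := by
    ext ω; simp only [mem_setOf_eq, mem_empty_iff_false, iff_false]
    exact fun h => absurd (h.trans hx) (not_le.2 (hpos ω))
  simp [cdfOf, this]

lemma cdf_pos_imp_pos' (hpos : ∀ ω, 0 < X ω) {x : ℝ} (hx : 0 < cdfOf X x) : 0 < x := by
  by_contra h
  rw [cdf_nonpos' hpos (not_lt.1 h)] at hx
  exact lt_irrefl _ hx

lemma exists_cdf_gt' {p : ℝ} (hp : p < 1) : ∃ z : ℝ, p < cdfOf X z := by
  have hm : Monotone (fun n : ℕ => {ω | X ω ≤ (n : ℝ)}) := by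
    intro m n hmn ω h
    simp only [mem_setOf_eq] at h ⊢
    exact le_trans h (Nat.cast_le.2 hmn)
  have hU : (⋃ n : ℕ, {ω | X ω ≤ (n : ℝ)}) = univ := by
    ext ω; simp only [mem_iUnion, mem_setOf_eq, mem_univ, iff_true]
    exact exists_nat_ge (X ω)
  have ht := tendsto_measure_iUnion_atTop (μ := (volume : Measure Ω)) hm
  rw [hU, measure_univ] at ht
  have ht2 : Tendsto (fun n : ℕ => cdfOf X (n : ℝ)) atTop (𝓝 1) := by
    have := (ENNReal.tendsto_toReal ENNReal.one_ne_top).comp ht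
    exact this
  obtain ⟨n, hn⟩ := (ht2.eventually (eventually_gt_nhds hp)).exists
  exact ⟨n, hn⟩

lemma exists_cdf_eq' (hcont : Continuous (cdfOf X)) (hpos : ∀ ω, 0 < X ω)
    {p : ℝ} (hp : p ∈ Ioo (0:ℝ) 1) : ∃ x, cdfOf X x = p := by
  obtain ⟨z, hz⟩ := exists_cdf_gt' (X := X) hp.2
  have h0 : cdfOf X 0 = 0 := cdf_nonpos' hpos le_rfl
  have h0z : (0:ℝ) ≤ z := by
    by_contra h
    have := cdf_mono' (X := X) (le_of_lt (not_le.1 h))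
    rw [h0] at this
    exact absurd (hz.trans_le this) (not_lt.2 (le_of_lt hp.1))
  have := intermediate_value_Icc h0z (hcont.continuousOn)
  have hmem : p ∈ Icc (cdfOf X 0) (cdfOf X z) := ⟨by rw [h0]; exact hp.1.le, hz.le⟩
  obtain ⟨x, _, hx⟩ := this hmem
  exact ⟨x, hx⟩

lemma quantile_cdf' (hpos : ∀ ω, 0 < X ω) (hcont : Continuous (cdfOf X))
    (hmono : StrictMonoOn (cdfOf X) {x | 0 < cdfOf X x ∧ cdfOf X x < 1})
    {x : ℝ} (hx0 : 0 < cdfOf X x) (hx1 : cdfOf X x < 1) :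
    quantile (cdfOf X) (cdfOf X x) = x := by
  set p := cdfOf X x with hp
  set s : Set ℝ := {y | p ≤ cdfOf X y} with hs
  have hclosed : IsClosed s := isClosed_le continuous_const hcont
  have hne : s.Nonempty := ⟨x, show p ≤ cdfOf X x from le_rfl⟩
  have hbdd : BddBelow s := by
    refine ⟨0, fun y hy => ?_⟩
    by_contra h
    have := cdf_nonpos' hpos (le_of_lt (not_le.1 h))
    rw [mem_setOf_eq, this] at hy
    exact absurd (hx0.trans_le hy) (lt_irrefl 0)
  have hqmem : sInf s ∈ s := hclosed.csInf_mem hne hbdd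
  have hqle : sInf s ≤ x := csInf_le hbdd (mem_setOf_eq ▸ le_rfl)
  rcases eq_or_lt_of_le hqle with h | h
  · exact h
  · exfalso
    have h1 : cdfOf X (sInf s) ≤ p := cdf_mono' h.le
    have h2 : cdfOf X (sInf s) = p := le_antisymm h1 hqmem
    have hqS : sInf s ∈ {y | 0 < cdfOf X y ∧ cdfOf X y < 1} := ⟨h2 ▸ hx0, h2 ▸ hx1⟩
    have := hmono hqS ⟨hx0, hx1⟩ h
    rw [h2] at this
    exact lt_irrefl _ this

lemma layercake' (hX : Measurable X) (hpos : ∀ ω, 0 < X ω) (hint : Integrable X)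
    {x : ℝ} (hx : 0 < x) :
    ∫ ω in {ω | X ω ≤ x}, X ω = ∫ t in Ioc 0 x, (cdfOf X x - cdfOf X t) := by
  have hms : MeasurableSet {ω | X ω ≤ x} := hX measurableSet_Iic
  set Y : Ω → ℝ := ({ω | X ω ≤ x}).indicator X with hY
  have hYint : Integrable Y := hint.indicator hms
  have hYnn : 0 ≤ᵐ[volume] Y :=
    Eventually.of_forall (indicator_nonneg fun ω _ => (hpos ω).le)
  have key := hYint.integral_eq_integral_meas_lt hYnn
  have hL : ∫ ω, Y ω = ∫ ω in {ω | X ω ≤ x}, X ω := integral_indicator hms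
  rw [hL] at key
  rw [key]
  have hptwise : ∀ t ∈ Ioi (0:ℝ),
      ENNReal.toReal (volume {a | t < Y a}) =
      (Ioc (0:ℝ) x).indicator (fun t => cdfOf X x - cdfOf X t) t := by
    intro t ht
    rw [mem_Ioi] at ht
    by_cases htx : t < x
    · have hset : {a | t < Y a} = {ω | X ω ≤ x} \ {ω | X ω ≤ t} := by
        ext a
        simp only [hY, indicator, mem_setOf_eq, mem_diff]
        by_cases hax : X a ≤ x
        · simp [hax, not_le]
        · simp [hax]
          exact ht.le
      have hsub : {ω | X ω ≤ t} ⊆ {ω | X ω ≤ x} := fun a ha => le_trans ha htx.le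
      rw [hset, measure_diff hsub ((hX measurableSet_Iic).nullMeasurableSet)
        (measure_ne_top _ _)]
      rw [ENNReal.toReal_sub_of_le (measure_mono hsub) (measure_ne_top _ _)]
      rw [indicator_of_mem (show t ∈ Ioc (0:ℝ) x from ⟨ht, htx.le⟩)]
      rfl
    · have hset : {a | t < Y a} = (∅ : Set Ω) := by
        ext a
        simp only [hY, indicator, mem_setOf_eq, mem_empty_iff_false, iff_false, not_lt]
        by_cases hax : X a ≤ x
        · simp [hax]; exact hax.trans (not_lt.1 htx)
        · simp [hax]; exact ht.le
      rw [hset]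
      have : t ∉ Ioc (0:ℝ) x ∨ (cdfOf X x - cdfOf X t = 0) := by
        by_cases h : t ∈ Ioc (0:ℝ) x
        · right
          have : t = x := le_antisymm h.2 (not_lt.1 htx)
          rw [this]; ring
        · left; exact h
      rcases this with h | h
      · simp [indicator_of_notMem h]
      · by_cases h2 : t ∈ Ioc (0:ℝ) x
        · simp [indicator_of_mem h2, h]
        · simp [indicator_of_notMem h2]
  rw [setIntegral_congr_fun measurableSet_Ioi (fun t ht => (measureReal_def _ _).trans (hptwise t ht))]
  rw [setIntegral_indicator measurableSet_Ioc]
  have : Ioi (0:ℝ) ∩ Ioc (0:ℝ) x = Ioc (0:ℝ) x :=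
    Set.inter_eq_self_of_subset_right (fun t (ht : t ∈ Ioc (0:ℝ) x) => ht.1)
  rw [this]

end Aux

set_option maxHeartbeats 1000000 in
/-- The Zenga curve of a positive r.v. `X` (with continuous CDF, strictly
increasing on its support) is constant on `(0,1)` iff `X` is Type I Pareto;
in that case the constant is `1/α`. -/
theorem zenga_const_iff_pareto {Ω : Type*} [MeasureSpace Ω]
    [IsProbabilityMeasure (volume : Measure Ω)]
    (X : Ω → ℝ) (hX : Measurable X) (hpos : ∀ ω, 0 < X ω) (hint : Integrable X)
    (hcont : Continuous (cdfOf X))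
    (hmono : StrictMonoOn (cdfOf X) {x | 0 < cdfOf X x ∧ cdfOf X x < 1}) :
    (∃ c : ℝ, ∀ p ∈ Ioo (0 : ℝ) 1, zenga X p = c) ↔
      ∃ α > (1 : ℝ), ∃ x₀ > (0 : ℝ),
        (∀ x, cdfOf X x = paretoCDF α x₀ x) ∧
        (∀ p ∈ Ioo (0 : ℝ) 1, zenga X p = 1 / α) := by
  constructor
  · rintro ⟨c, hc⟩
    set k : ℝ := 1 - c with hkdef
    have hucont : Continuous (fun t : ℝ => 1 - cdfOf X t) := continuous_const.sub hcont
    have huanti : Antitone (fun t : ℝ => 1 - cdfOf X t) :=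
      fun a b hab => sub_le_sub_left (cdf_mono' hab) 1
    have hμXpos : 0 < ∫ ω, X ω := by
      rw [integral_pos_iff_support_of_nonneg (fun ω => (hpos ω).le) hint]
      have : Function.support X = univ := by
        ext ω; simp [Function.support, ne_of_gt (hpos ω)]
      rw [this, measure_univ]
      norm_num
    -- Step 1: the key functional relation
    have hrel : ∀ x, 0 < cdfOf X x → cdfOf X x < 1 →
        (∫ t in Ioc 0 x, (1 - cdfOf X t)) =
          x * (1 - cdfOf X x) + (∫ ω, X ω) * (1 - (1 - cdfOf X x) ^ k) := by
      intro x hx0 hx1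
      have hxpos : 0 < x := cdf_pos_imp_pos' hpos hx0
      have hq := quantile_cdf' hpos hcont hmono hx0 hx1
      have hzen := hc (cdfOf X x) ⟨hx0, hx1⟩
      simp only [zenga, hq] at hzen
      have hms : MeasurableSet {ω | X ω ≤ x} := hX measurableSet_Iic
      have hcompl : (∫ ω in {ω | X ω ≤ x}, X ω) + (∫ ω in {ω | X ω ≤ x}ᶜ, X ω)
          = ∫ ω, X ω := integral_add_compl hms hint
      have hmeasc : ((volume : Measure Ω) {ω | X ω ≤ x}ᶜ).toReal = 1 - cdfOf X x := by
        rw [measure_compl hms (measure_ne_top _ _), measure_univ,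
          ENNReal.toReal_sub_of_le prob_le_one ENNReal.one_ne_top]
        simp [cdfOf]
      have hlow : x * (1 - cdfOf X x) ≤ ∫ ω in {ω | X ω ≤ x}ᶜ, X ω := by
        have := setIntegral_mono_on (μ := (volume : Measure Ω))
          (s := {ω | X ω ≤ x}ᶜ) (f := fun _ => x) (g := X)
          (integrableOn_const (measure_lt_top _ _).ne) hint.integrableOn
          hms.compl (fun ω hω => le_of_lt (by simpa [mem_compl_iff, mem_setOf_eq, not_le] using hω))
        rw [setIntegral_const, measureReal_def, hmeasc, smul_eq_mul] at this
        linarith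
      have hA_lt : (∫ ω in {ω | X ω ≤ x}, X ω) < ∫ ω, X ω := by
        nlinarith [mul_pos hxpos (by linarith : (0:ℝ) < 1 - cdfOf X x)]
      have h1Q : 0 < 1 - incMoment X x := by
        have : incMoment X x < 1 := by
          rw [incMoment, div_lt_one hμXpos]; exact hA_lt
        linarith
      have hl : Real.log (1 - cdfOf X x) ≠ 0 :=
        ne_of_lt (Real.log_neg (by linarith) (by linarith))
      have hL : Real.log (1 - incMoment X x) = k * Real.log (1 - cdfOf X x) := by
        have h2 : Real.log (1 - incMoment X x) / Real.log (1 - cdfOf X x) = k := by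
          rw [hkdef]; linarith
        rw [div_eq_iff hl] at h2
        linarith [h2]
      have hexp : 1 - incMoment X x = (1 - cdfOf X x) ^ k := by
        rw [← Real.exp_log h1Q, hL,
          Real.rpow_def_of_pos (by linarith : (0:ℝ) < 1 - cdfOf X x), mul_comm]
      have hA : (∫ ω in {ω | X ω ≤ x}, X ω)
          = (∫ ω, X ω) * (1 - (1 - cdfOf X x) ^ k) := by
        have hQ : incMoment X x = (∫ ω in {ω | X ω ≤ x}, X ω) / ∫ ω, X ω := rfl
        have : incMoment X x = 1 - (1 - cdfOf X x) ^ k := by linarith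
        rw [hQ] at this
        field_simp at this
        linarith
      have hlc := layercake' hX hpos hint hxpos
      have hint2 : ∫ t in Ioc 0 x, (cdfOf X x - cdfOf X t)
          = (∫ t in Ioc 0 x, (1 - cdfOf X t)) - x * (1 - cdfOf X x) := by
        rw [← int_sub_const' hucont hxpos.le (1 - cdfOf X x)]
        apply setIntegral_congr_fun measurableSet_Ioc
        intro t _
        ring
      rw [hlc, hint2] at hA
      linarith
    -- Step 2: the envelope identity
    have hE : ∀ x, 0 < cdfOf X x → cdfOf X x < 1 →
        x = (∫ ω, X ω) * k * (1 - cdfOf X x) ^ (k - 1) := by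
      intro x hx0 hx1
      have hSopen : IsOpen {y : ℝ | 0 < cdfOf X y ∧ cdfOf X y < 1} := by
        have : {y : ℝ | 0 < cdfOf X y ∧ cdfOf X y < 1} = cdfOf X ⁻¹' (Ioo 0 1) := rfl
        rw [this]; exact isOpen_Ioo.preimage hcont
      obtain ⟨ε, hε, hball⟩ := Metric.isOpen_iff.1 hSopen x ⟨hx0, hx1⟩
      have hIoo : Ioo x (x + ε) ⊆ {y : ℝ | 0 < cdfOf X y ∧ cdfOf X y < 1} := by
        intro y hy
        apply hball
        rw [Metric.mem_ball, Real.dist_eq, abs_lt]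
        exact ⟨by linarith [hy.1], by linarith [hy.2]⟩
      have hux0 : (0:ℝ) < 1 - cdfOf X x := by linarith
      set q : ℝ → ℝ := fun y => (∫ ω, X ω) *
        ((1 - cdfOf X x) ^ k - (1 - cdfOf X y) ^ k)
        / ((1 - cdfOf X x) - (1 - cdfOf X y)) with hqdef
      have hev : ∀ᶠ y in 𝓝[>] x, y ∈ Ioo x (x + ε) :=
        Ioo_mem_nhdsGT_of_mem ⟨le_refl x, by linarith⟩
      have hbounds : ∀ y ∈ Ioo x (x + ε), x ≤ q y ∧ q y ≤ y := by
        intro y hy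
        obtain ⟨hy0, hy1⟩ := hIoo hy
        have hxy : x < y := hy.1
        have hD : cdfOf X x < cdfOf X y := hmono ⟨hx0, hx1⟩ ⟨hy0, hy1⟩ hxy
        have hWx := hrel x hx0 hx1
        have hWy := hrel y hy0 hy1
        have hWd := W_add' hucont (cdf_pos_imp_pos' hpos hx0) hxy.le
        have hsw := sandwich' hucont huanti hxy.le
        have key1 : x * ((1 - cdfOf X x) - (1 - cdfOf X y)) ≤
            (∫ ω, X ω) * ((1 - cdfOf X x) ^ k - (1 - cdfOf X y) ^ k) := by
          nlinarith [hsw.1, hsw.2]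
        have key2 : (∫ ω, X ω) * ((1 - cdfOf X x) ^ k - (1 - cdfOf X y) ^ k)
            ≤ y * ((1 - cdfOf X x) - (1 - cdfOf X y)) := by
          nlinarith [hsw.1, hsw.2]
        constructor
        · rw [hqdef, le_div_iff₀ (by linarith)]
          linarith
        · rw [hqdef, div_le_iff₀ (by linarith)]
          linarith
      have hq2 : Tendsto q (𝓝[>] x) (𝓝 x) := by
        refine tendsto_of_tendsto_of_tendsto_of_le_of_le' tendsto_const_nhds
          (tendsto_id.mono_left nhdsWithin_le_nhds) ?_ ?_
        · filter_upwards [hev] with y hy using (hbounds y hy).1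
        · filter_upwards [hev] with y hy using (hbounds y hy).2
      have hg : HasDerivAt (fun t : ℝ => (∫ ω, X ω) * t ^ k)
          ((∫ ω, X ω) * (k * (1 - cdfOf X x) ^ (k - 1))) (1 - cdfOf X x) :=
        (Real.hasDerivAt_rpow_const (Or.inl hux0.ne')).const_mul _
      have hslope := hasDerivAt_iff_tendsto_slope.1 hg
      have htu : Tendsto (fun y => 1 - cdfOf X y) (𝓝[>] x)
          (𝓝[≠] (1 - cdfOf X x)) := by
        rw [tendsto_nhdsWithin_iff]
        constructor
        · exact (hucont.tendsto x).mono_left nhdsWithin_le_nhds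
        · filter_upwards [hev] with y hy
          obtain ⟨hy0, hy1⟩ := hIoo hy
          have hD : cdfOf X x < cdfOf X y := hmono ⟨hx0, hx1⟩ ⟨hy0, hy1⟩ hy.1
          simp only [mem_compl_iff, mem_singleton_iff]
          intro hcontra
          have h3 : cdfOf X x = cdfOf X y := by linarith
          linarith
      have hq3 : Tendsto q (𝓝[>] x)
          (𝓝 ((∫ ω, X ω) * (k * (1 - cdfOf X x) ^ (k - 1)))) := by
        have hcomp := hslope.comp htu
        apply hcomp.congr'
        filter_upwards [hev] with y hy
        obtain ⟨hy0, hy1⟩ := hIoo hy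
        have hD : cdfOf X x < cdfOf X y := hmono ⟨hx0, hx1⟩ ⟨hy0, hy1⟩ hy.1
        show slope (fun t : ℝ => (∫ ω, X ω) * t ^ k)
          (1 - cdfOf X x) (1 - cdfOf X y) = q y
        rw [slope_def_field, hqdef]
        rw [div_eq_div_iff (by intro h; apply absurd (sub_eq_zero.1 h); intro h2; linarith)
          (by intro h; apply absurd (sub_eq_zero.1 h); intro h2; linarith)]
        ring
      have huniq := tendsto_nhds_unique hq2 hq3
      rw [mul_assoc]
      exact huniq
    -- Step 3: algebra
    obtain ⟨s₁, hs₁⟩ := exists_cdf_eq' hcont hpos (by norm_num : (1/3 : ℝ) ∈ Ioo (0:ℝ) 1)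
    obtain ⟨s₂, hs₂⟩ := exists_cdf_eq' hcont hpos (by norm_num : (2/3 : ℝ) ∈ Ioo (0:ℝ) 1)
    have hs₁0 : 0 < cdfOf X s₁ := by rw [hs₁]; norm_num
    have hs₁1 : cdfOf X s₁ < 1 := by rw [hs₁]; norm_num
    have hs₂0 : 0 < cdfOf X s₂ := by rw [hs₂]; norm_num
    have hs₂1 : cdfOf X s₂ < 1 := by rw [hs₂]; norm_num
    have hs₁pos : 0 < s₁ := cdf_pos_imp_pos' hpos hs₁0
    have hs12 : s₁ < s₂ := by
      by_contra h
      have := cdf_mono' (X := X) (not_lt.1 h)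
      rw [hs₁, hs₂] at this
      norm_num at this
    have hE₁ := hE s₁ hs₁0 hs₁1
    have hE₂ := hE s₂ hs₂0 hs₂1
    rw [hs₁] at hE₁
    rw [hs₂] at hE₂
    have h23 : (1:ℝ) - 1/3 = 2/3 := by norm_num
    have h13 : (1:ℝ) - 2/3 = 1/3 := by norm_num
    rw [h23] at hE₁
    rw [h13] at hE₂
    have hr₁ : (0:ℝ) < (2/3 : ℝ) ^ (k - 1) := Real.rpow_pos_of_pos (by norm_num) _
    have hr₂ : (0:ℝ) < (1/3 : ℝ) ^ (k - 1) := Real.rpow_pos_of_pos (by norm_num) _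
    have hk0 : 0 < k := by
      by_contra h
      have hk' : k ≤ 0 := not_lt.1 h
      have : (∫ ω, X ω) * k * (2/3 : ℝ) ^ (k - 1) ≤ 0 := by
        apply mul_nonpos_of_nonpos_of_nonneg
        · exact mul_nonpos_of_nonneg_of_nonpos hμXpos.le hk'
        · exact hr₁.le
      linarith
    have hk1 : k < 1 := by
      by_contra h
      have hk' : 1 ≤ k := not_lt.1 h
      have hle : (1/3 : ℝ) ^ (k - 1) ≤ (2/3 : ℝ) ^ (k - 1) :=
        Real.rpow_le_rpow (by norm_num) (by norm_num) (by linarith)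
      have : s₂ ≤ s₁ := by
        rw [hE₁, hE₂]
        apply mul_le_mul_of_nonneg_left hle
        positivity
      linarith
    have hx₀pos : 0 < (∫ ω, X ω) * k := mul_pos hμXpos hk0
    have h1k : 0 < 1 - k := by linarith
    -- the explicit quantile relation
    have hFp : ∀ p ∈ Ioo (0:ℝ) 1,
        cdfOf X ((∫ ω, X ω) * k * (1 - p) ^ (k - 1)) = p := by
      intro p hp
      obtain ⟨s, hs⟩ := exists_cdf_eq' hcont hpos hp
      have h0 : 0 < cdfOf X s := by rw [hs]; exact hp.1
      have h1 : cdfOf X s < 1 := by rw [hs]; exact hp.2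
      have := hE s h0 h1
      rw [hs] at this
      rw [← this, hs]
    have hFx₀ : cdfOf X ((∫ ω, X ω) * k) = 0 := by
      have hle : ∀ p ∈ Ioo (0:ℝ) 1, cdfOf X ((∫ ω, X ω) * k) ≤ p := by
        intro p hp
        have h1p : 0 < 1 - p := by linarith [hp.2]
        have h1 : (1:ℝ) ≤ (1 - p) ^ (k - 1) := by
          apply le_of_lt
          rw [Real.one_lt_rpow_iff_of_pos h1p]
          right
          exact ⟨by linarith [hp.1], by linarith⟩
        calc cdfOf X ((∫ ω, X ω) * k)
            ≤ cdfOf X ((∫ ω, X ω) * k * (1 - p) ^ (k - 1)) :=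
              cdf_mono' (le_mul_of_one_le_right hx₀pos.le h1)
          _ = p := hFp p hp
      refine le_antisymm ?_ (cdf_nonneg' X _)
      by_contra h
      have hgt : 0 < cdfOf X ((∫ ω, X ω) * k) := lt_of_not_ge (fun hle' => h hle')
      have hhalf : cdfOf X ((∫ ω, X ω) * k) / 2 ∈ Ioo (0:ℝ) 1 := by
        constructor
        · linarith
        · have := cdf_le_one' (X := X) ((∫ ω, X ω) * k)
          linarith
      have := hle _ hhalf
      linarith
    refine ⟨1 / (1 - k), ?_, (∫ ω, X ω) * k, hx₀pos, ?_, ?_⟩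
    · rw [gt_iff_lt, lt_div_iff₀ h1k]; linarith
    · -- F = paretoCDF
      intro x
      rcases lt_trichotomy x ((∫ ω, X ω) * k) with h | h | h
      · rw [paretoCDF, if_neg (not_le.2 h)]
        refine le_antisymm ?_ (cdf_nonneg' X _)
        calc cdfOf X x ≤ cdfOf X ((∫ ω, X ω) * k) := cdf_mono' h.le
          _ = 0 := hFx₀
      · rw [h, paretoCDF, if_pos le_rfl, div_self hx₀pos.ne', Real.one_rpow, hFx₀]
        ring
      · rw [paretoCDF, if_pos h.le]
        have ht1 : 1 < x / ((∫ ω, X ω) * k) := (one_lt_div hx₀pos).2 h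
        have hαneg : -(1 / (1 - k)) < 0 := by
          rw [neg_lt, neg_zero]
          positivity
        have hp1 : (x / ((∫ ω, X ω) * k)) ^ (-(1 / (1 - k))) < 1 :=
          Real.rpow_lt_one_of_one_lt_of_neg ht1 hαneg
        have hp0 : 0 < (x / ((∫ ω, X ω) * k)) ^ (-(1 / (1 - k))) :=
          Real.rpow_pos_of_pos (by linarith) _
        have key := hFp (1 - (x / ((∫ ω, X ω) * k)) ^ (-(1 / (1 - k))))
          ⟨by linarith, by linarith⟩
        have harg : (∫ ω, X ω) * k *
            (1 - (1 - (x / ((∫ ω, X ω) * k)) ^ (-(1 / (1 - k))))) ^ (k - 1) = x := by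
          have h1 : (1 - (1 - (x / ((∫ ω, X ω) * k)) ^ (-(1 / (1 - k)))))
              = (x / ((∫ ω, X ω) * k)) ^ (-(1 / (1 - k))) := by ring
          rw [h1, ← Real.rpow_mul (by linarith : (0:ℝ) ≤ x / ((∫ ω, X ω) * k))]
          have hexp1 : -(1 / (1 - k)) * (k - 1) = 1 := by
            rw [show k - 1 = -(1 - k) by ring, neg_mul_neg, one_div, inv_mul_cancel₀ h1k.ne']
          rw [hexp1, Real.rpow_one]
          field_simp
        rw [harg] at key
        linarith [key]
    · -- zenga = 1/α
      intro p hp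
      rw [hc p hp]
      rw [one_div_one_div]
      rw [hkdef]
      ring
  · rintro ⟨α, hα, x₀, hx₀, hF, hz⟩
    exact ⟨1 / α, hz⟩
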